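/- Let X be a connected (strongly connected) digraph whose A-Laplacian L is normal. Then 0 is an eigenvalue of L with algebraic multiplicity exactly 1, and every nonzero eigenvalue λ of L satisfies Re(λ) > 0. -/

import Mathlib

/-!
Normality of `L = D - A` compares the diagonals of `L Lᵀ` and `Lᵀ L`, which differ exactly by
out-degree minus in-degree, so the digraph is eulerian. For an eulerian digraph the hermitian part
of `L` is the Laplacian of the underlying undirected multigraph:
`2 Re ⟪x, L x⟫ = ∑_{u → v} |x u - x v|²`. Hence `Re ⟪x, L x⟫ ≥ 0`, with equality only for `x`
constant along edges, i.e. constant by strong connectivity. An eigenvector `x` with eigenvalue `λ`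
has `Re ⟪x, L x⟫ = Re λ ‖x‖²`, so `Re λ ≥ 0`, and `Re λ = 0` forces `L x = 0`, i.e. `λ = 0`. Finally
a normal matrix has `ker L² = ker L`, so the algebraic multiplicity of `0` is `dim ker L = 1`.
-/

open Matrix Finset

def adjMat {V : Type*} [Fintype V] (R : V → V → Prop) [DecidableRel R] :
    Matrix V V ℝ := fun u v => if R u v then 1 else 0

def outDeg {V : Type*} [Fintype V] (R : V → V → Prop) [DecidableRel R] (u : V) : ℕ :=
  (Finset.univ.filter (fun v => R u v)).card

def lap {V : Type*} [Fintype V] [DecidableEq V] (R : V → V → Prop) [DecidableRel R] :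
    Matrix V V ℝ :=
  Matrix.diagonal (fun u => (outDeg R u : ℝ)) - adjMat R

namespace Matrix

variable {n : Type*} [Fintype n]

section Normal

variable {R : Type*} [CommRing R] [PartialOrder R] [StarRing R] [StarOrderedRing R]
  [NoZeroDivisors R] {A : Matrix n n R} [IsStarNormal A]

theorem mulVec_eq_zero_of_mulVec_mulVec_eq_zero {v : n → R} (h : A *ᵥ A *ᵥ v = 0) :
    A *ᵥ v = 0 := by
  have hstar : Aᴴ *ᵥ A *ᵥ v = 0 := by
    rw [← self_mul_conjTranspose_mulVec_eq_zero, ← star_eq_conjTranspose, ← star_comm_self' A,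
      ← mulVec_mulVec, h, mulVec_zero]
  rwa [← conjTranspose_mul_self_mulVec_eq_zero, ← mulVec_mulVec]

variable [DecidableEq n]

theorem maxGenEigenspace_toLin'_zero :
    Module.End.maxGenEigenspace (toLin' A) 0 = LinearMap.ker (toLin' A) := by
  have hpow (k : ℕ) (v : n → R) (hk : (toLin' A ^ k) v = 0) : toLin' A v = 0 := by
    induction k generalizing v with
    | zero => simp_all
    | succ k ih =>
      rw [pow_succ, Module.End.mul_apply] at hk
      simpa only [toLin'_apply] using mulVec_eq_zero_of_mulVec_mulVec_eq_zero (ih _ hk)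
  refine le_antisymm (fun v hv => ?_)
    (Module.End.eigenspace_zero (toLin' A) ▸ Module.End.eigenspace_le_maxGenEigenspace)
  obtain ⟨k, hk⟩ := (Module.End.mem_maxGenEigenspace _ _ _).mp hv
  rw [zero_smul, sub_zero] at hk
  exact hpow k v hk

end Normal

theorem rootMultiplicity_zero_charpoly {K : Type*} [Field K] [PartialOrder K] [StarRing K]
    [StarOrderedRing K] [DecidableEq n] (A : Matrix n n K) [IsStarNormal A] :
    A.charpoly.rootMultiplicity 0 = Module.finrank K (LinearMap.ker (toLin' A)) := by
  rw [Polynomial.rootMultiplicity_eq_natTrailingDegree', ← charpoly_toLin',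
    ← LinearMap.finrank_maxGenEigenspace_zero_eq, maxGenEigenspace_toLin'_zero]

theorem isStarNormal_map_ofReal {L : Matrix n n ℝ} (h : L * Lᵀ = Lᵀ * L) :
    IsStarNormal (L.map Complex.ofReal) := by
  have hstar : star (L.map Complex.ofReal) = Lᵀ.map Complex.ofReal := by
    ext; simp
  have hmap := congrArg (·.map Complex.ofRealHom) h.symm
  simp only [Matrix.map_mul] at hmap
  exact ⟨hstar ▸ hmap⟩

theorem re_star_dotProduct_map_ofReal_mulVec (L : Matrix n n ℝ) (x : n → ℂ) :
    (star x ⬝ᵥ L.map Complex.ofReal *ᵥ x).re =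
      ∑ u, ∑ v, L u v * (x u * starRingEnd ℂ (x v)).re := by
  simp only [dotProduct, mulVec, mul_sum, Complex.re_sum]
  refine sum_congr rfl fun u _ => sum_congr rfl fun v _ => ?_
  simp [Complex.mul_re]
  ring

open ComplexOrder in
theorem re_pos_of_mem_spectrum [DecidableEq n] {A : Matrix n n ℂ}
    (hA : ∀ x, 0 ≤ (star x ⬝ᵥ A *ᵥ x).re)
    (hA_zero : ∀ x, (star x ⬝ᵥ A *ᵥ x).re = 0 → A *ᵥ x = 0)
    {μ : ℂ} (hμ : μ ∈ spectrum ℂ A) (hμ_zero : μ ≠ 0) : 0 < μ.re := by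
  rw [← spectrum_toLin', ← Module.End.hasEigenvalue_iff_mem_spectrum] at hμ
  obtain ⟨x, hx⟩ := hμ.exists_hasEigenvector
  have hAx : A *ᵥ x = μ • x := by simpa only [toLin'_apply] using hx.apply_eq_smul
  obtain ⟨hnorm_pos, hnorm_im⟩ := Complex.pos_iff.mp (dotProduct_star_self_pos_iff.mpr hx.2)
  have hre : (star x ⬝ᵥ A *ᵥ x).re = μ.re * (star x ⬝ᵥ x).re := by
    rw [hAx, dotProduct_smul, smul_eq_mul, Complex.mul_re, ← hnorm_im, mul_zero, sub_zero]
  refine lt_of_le_of_ne (nonneg_of_mul_nonneg_left (hre ▸ hA x) hnorm_pos) fun h => ?_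
  have hx_zero := hA_zero x (by rw [hre, ← h, zero_mul])
  rw [hAx, smul_eq_zero] at hx_zero
  exact hx_zero.elim hμ_zero hx.2

end Matrix

theorem Relation.ReflTransGen.apply_eq {α β : Type*} {r : α → α → Prop} {f : α → β}
    (hf : ∀ a b, r a b → f a = f b) {a b : α} (hab : Relation.ReflTransGen r a b) :
    f a = f b := by
  induction hab with
  | refl => rfl
  | tail _ hbc ih => exact ih.trans (hf _ _ hbc)

section Digraph

variable {V : Type*} [Fintype V] (R : V → V → Prop) [DecidableRel R]

def inDeg (u : V) : ℕ := #{v | R v u}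

theorem adjMat_nonneg (u v : V) : 0 ≤ adjMat R u v := by
  unfold adjMat; split_ifs <;> norm_num

theorem adjMat_sq (u v : V) : adjMat R u v ^ 2 = adjMat R u v := by
  unfold adjMat; split_ifs <;> norm_num

theorem sum_adjMat_row (u : V) : ∑ v, adjMat R u v = outDeg R u := by
  simp [adjMat, outDeg, sum_boole]

theorem sum_adjMat_col (u : V) : ∑ v, adjMat R v u = inDeg R u := by
  simp [adjMat, inDeg, sum_boole]

variable [DecidableEq V]

theorem sum_lap_row (u : V) : ∑ v, lap R u v = 0 := by
  simp [lap, sum_sub_distrib, diagonal_apply, sum_adjMat_row]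

theorem sum_sq_lap_row (u : V) :
    ∑ v, lap R u v ^ 2 = outDeg R u ^ 2 - 2 * outDeg R u * adjMat R u u + outDeg R u := by
  simp only [lap, Matrix.sub_apply, diagonal_apply, sub_sq, adjMat_sq, sum_add_distrib,
    sum_sub_distrib, ite_pow, mul_ite, ite_mul, zero_mul, mul_zero, zero_pow two_ne_zero,
    Fintype.sum_ite_eq, sum_adjMat_row]

theorem sum_sq_lap_col (u : V) :
    ∑ v, lap R v u ^ 2 = outDeg R u ^ 2 - 2 * outDeg R u * adjMat R u u + inDeg R u := by
  simp only [lap, Matrix.sub_apply, diagonal_apply, sub_sq, adjMat_sq, sum_add_distrib,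
    sum_sub_distrib, ite_pow, mul_ite, ite_mul, zero_mul, mul_zero, zero_pow two_ne_zero,
    Fintype.sum_ite_eq', sum_adjMat_col]

theorem inDeg_eq_outDeg (hnormal : lap R * (lap R)ᵀ = (lap R)ᵀ * lap R) (u : V) :
    inDeg R u = outDeg R u := by
  have h := congrFun (congrFun hnormal u) u
  simp only [mul_apply, transpose_apply, ← sq, sum_sq_lap_row, sum_sq_lap_col] at h
  exact_mod_cast (add_left_cancel h).symm

theorem two_mul_re_star_dotProduct_lap_mulVec (hbal : ∀ u, inDeg R u = outDeg R u)
    (x : V → ℂ) :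
    2 * (star x ⬝ᵥ (lap R).map Complex.ofReal *ᵥ x).re =
      ∑ u, ∑ v, adjMat R u v * Complex.normSq (x u - x v) := by
  have hdiag (u : V) : (x u * starRingEnd ℂ (x u)).re = Complex.normSq (x u) := by
    rw [Complex.mul_conj, Complex.ofReal_re]
  have hquad : (star x ⬝ᵥ (lap R).map Complex.ofReal *ᵥ x).re =
      ∑ u, outDeg R u * Complex.normSq (x u) -
        ∑ u, ∑ v, adjMat R u v * (x u * starRingEnd ℂ (x v)).re := by
    simp only [re_star_dotProduct_map_ofReal_mulVec, lap, Matrix.sub_apply, diagonal_apply,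
      sub_mul, ite_mul, zero_mul, sum_sub_distrib, Fintype.sum_ite_eq, hdiag]
  have hedge (u v : V) : adjMat R u v * Complex.normSq (x u - x v) =
      adjMat R u v * Complex.normSq (x u) + adjMat R u v * Complex.normSq (x v) -
        2 * (adjMat R u v * (x u * starRingEnd ℂ (x v)).re) := by
    rw [Complex.normSq_sub]; ring
  have hout : ∑ u, ∑ v, adjMat R u v * Complex.normSq (x u) =
      ∑ u, outDeg R u * Complex.normSq (x u) := by
    simp only [← sum_mul, sum_adjMat_row]
  have hin : ∑ u, ∑ v, adjMat R u v * Complex.normSq (x v) =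
      ∑ u, outDeg R u * Complex.normSq (x u) := by
    rw [sum_comm]
    simp only [← sum_mul, sum_adjMat_col, hbal]
  simp only [hedge, sum_add_distrib, sum_sub_distrib, hout, hin, ← mul_sum, hquad]
  ring

theorem re_star_dotProduct_lap_mulVec_nonneg (hbal : ∀ u, inDeg R u = outDeg R u)
    (x : V → ℂ) : 0 ≤ (star x ⬝ᵥ (lap R).map Complex.ofReal *ᵥ x).re := by
  have h := two_mul_re_star_dotProduct_lap_mulVec R hbal x
  have hsum : 0 ≤ ∑ u, ∑ v, adjMat R u v * Complex.normSq (x u - x v) :=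
    sum_nonneg fun u _ => sum_nonneg fun v _ =>
      mul_nonneg (adjMat_nonneg R u v) (Complex.normSq_nonneg _)
  linarith

theorem eq_of_re_star_dotProduct_lap_mulVec_eq_zero (hbal : ∀ u, inDeg R u = outDeg R u)
    {x : V → ℂ} (hx : (star x ⬝ᵥ (lap R).map Complex.ofReal *ᵥ x).re = 0) {u v : V}
    (huv : R u v) : x u = x v := by
  have hsum := two_mul_re_star_dotProduct_lap_mulVec R hbal x
  rw [hx, mul_zero, eq_comm] at hsum
  have hterm_nonneg (u v : V) : 0 ≤ adjMat R u v * Complex.normSq (x u - x v) :=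
    mul_nonneg (adjMat_nonneg R u v) (Complex.normSq_nonneg _)
  have hterm := (sum_eq_zero_iff_of_nonneg fun v _ => hterm_nonneg u v).mp
    ((sum_eq_zero_iff_of_nonneg fun u _ => sum_nonneg fun v _ => hterm_nonneg u v).mp hsum u
      (mem_univ u)) v (mem_univ v)
  rw [adjMat, if_pos huv, one_mul, Complex.normSq_eq_zero, sub_eq_zero] at hterm
  exact hterm

theorem lap_mulVec_eq_zero_of_forall_eq {x : V → ℂ} (hx : ∀ u v, x u = x v) :
    (lap R).map Complex.ofReal *ᵥ x = 0 := by
  ext u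
  calc ((lap R).map Complex.ofReal *ᵥ x) u = ∑ v, (lap R u v : ℂ) * x u :=
        sum_congr rfl fun v _ => by rw [hx v u]; rfl
    _ = 0 := by rw [← sum_mul, ← Complex.ofReal_sum, sum_lap_row, Complex.ofReal_zero, zero_mul]

theorem lap_mulVec_eq_zero_of_re_eq_zero (hbal : ∀ u, inDeg R u = outDeg R u)
    (hconn : ∀ u v : V, Relation.ReflTransGen R u v) {x : V → ℂ}
    (hx : (star x ⬝ᵥ (lap R).map Complex.ofReal *ᵥ x).re = 0) :
    (lap R).map Complex.ofReal *ᵥ x = 0 :=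
  lap_mulVec_eq_zero_of_forall_eq R fun u v =>
    (hconn u v).apply_eq (f := x) fun _ _ => eq_of_re_star_dotProduct_lap_mulVec_eq_zero R hbal hx

theorem ker_toLin'_lap [Nonempty V] (hbal : ∀ u, inDeg R u = outDeg R u)
    (hconn : ∀ u v : V, Relation.ReflTransGen R u v) :
    LinearMap.ker (toLin' ((lap R).map Complex.ofReal)) = ℂ ∙ 1 := by
  ext x
  rw [LinearMap.mem_ker, toLin'_apply, Submodule.mem_span_singleton]
  constructor
  · intro hx
    have hconst : ∀ u v, x u = x v := fun u v =>
      (hconn u v).apply_eq (f := x) fun _ _ => eq_of_re_star_dotProduct_lap_mulVec_eq_zero R hbal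
        (by rw [hx, dotProduct_zero, Complex.zero_re])
    exact ⟨x (Classical.arbitrary V), funext fun u => by
      rw [Pi.smul_apply, Pi.one_apply, smul_eq_mul, mul_one, hconst]⟩
  · rintro ⟨c, rfl⟩
    exact lap_mulVec_eq_zero_of_forall_eq R fun _ _ => rfl

end Digraph

theorem stmt9_general {V : Type*} [Fintype V] [DecidableEq V] [Nonempty V]
    (R : V → V → Prop) [DecidableRel R]
    (hconn : ∀ u v : V, Relation.ReflTransGen R u v)
    (hnormal : lap R * (lap R)ᵀ = (lap R)ᵀ * lap R) :
    ((lap R).map (fun x : ℝ => (x : ℂ))).charpoly.rootMultiplicity 0 = 1 ∧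
      ∀ lam ∈ spectrum ℂ ((lap R).map (fun x : ℝ => (x : ℂ))), lam ≠ 0 → 0 < lam.re := by
  have hbal := inDeg_eq_outDeg R hnormal
  refine ⟨?_, fun lam hlam hne => ?_⟩
  · have := isStarNormal_map_ofReal hnormal
    open ComplexOrder in
    rw [rootMultiplicity_zero_charpoly, ker_toLin'_lap R hbal hconn,
      finrank_span_singleton one_ne_zero]
  · exact re_pos_of_mem_spectrum (re_star_dotProduct_lap_mulVec_nonneg R hbal)
      (fun _ => lap_mulVec_eq_zero_of_re_eq_zero R hbal hconn) hlam hne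

theorem stmt9 {V : Type*} [Fintype V] [DecidableEq V] [Nonempty V]
    (R : V → V → Prop) [DecidableRel R]
    (hloopless : ∀ u, ¬ R u u)
    (hconn : ∀ u v : V, Relation.ReflTransGen R u v)
    (hnormal : lap R * (lap R)ᵀ = (lap R)ᵀ * lap R) :
    ((lap R).map (fun x : ℝ => (x : ℂ))).charpoly.rootMultiplicity 0 = 1 ∧
      ∀ lam ∈ spectrum ℂ ((lap R).map (fun x : ℝ => (x : ℂ))), lam ≠ 0 → 0 < lam.re :=
  stmt9_general R hconn hnormal
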